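/- arXiv:0905.4861 — 3 statements merged into one kernel-verified Lean document; each statement's English description precedes it below -/
import Mathlib

section
/- Let $G$ be an abelian group and $G_1, \dots, G_n$ subgroups of $G$ each of infinite index, i.e. $|G/G_i| = \infty$ for $1 \le i \le n$. Then for any elements $g_1, \dots, g_n \in G$, the union of cosets $\bigcup_{i=1}^n (g_i + G_i)$ is not all of $G$. -/
/-!
B. H. Neumann's lemma: if finitely many cosets cover a group, one of the subgroups has finite index.
-/

open Pointwise

theorem AddSubgroup.exists_finiteIndex_of_iUnion_vadd_eq_univ {G ι : Type*} [AddGroup G]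
    [Fintype ι] {H : ι → AddSubgroup G} {g : ι → G}
    (hcover : ⋃ i, g i +ᵥ (H i : Set G) = Set.univ) : ∃ i, (H i).FiniteIndex := by
  obtain ⟨i, -, hi⟩ := AddSubgroup.exists_finiteIndex_of_leftCoset_cover (s := Finset.univ)
    (by simpa using hcover)
  exact ⟨i, hi⟩

theorem coset_union_ne_univ {G : Type*} [AddCommGroup G] (n : ℕ)
    (H : Fin n → AddSubgroup G) (hH : ∀ i, Infinite (G ⧸ H i))
    (g : Fin n → G) :
    (⋃ i, g i +ᵥ ((H i : Set G))) ≠ Set.univ := by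
  intro hcover
  obtain ⟨i, hi⟩ := AddSubgroup.exists_finiteIndex_of_iUnion_vadd_eq_univ hcover
  exact not_finite_iff_infinite.mpr (hH i) (AddSubgroup.finiteIndex_iff_finite_quotient.mp hi)
end

section
/- Let $R$ be a commutative ring, $I$ an ideal of $R$, and $I_1, \dots, I_n$ ideals of $R$ such that the quotient $I/(I \cap I_i)$ is infinite for all $1 \le i \le n$. Then for all $a, a_1, \dots, a_n \in R$, the coset $a + I$ is not contained in $\bigcup_{i=1}^n (a_i + (I \cap I_i))$. -/
/-! Translating by `-a`, each coset `b i + (I ⊓ J i)` meets `I` in at most one coset of the subgroup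
`I ⊓ J i` of `I`, so a covering of `a + I` yields a covering of `I` by finitely many cosets of these
subgroups. By B. H. Neumann's lemma one of them then has finite index in `I`. -/

open Pointwise

namespace AddSubgroup

variable {G : Type*} [AddGroup G] {H L : AddSubgroup G}

theorem exists_preimage_vadd_subset_vadd_addSubgroupOf (a b : G) :
    ∃ c : H, (fun x : H => a + (x : G)) ⁻¹' (b +ᵥ (L : Set G)) ⊆
      c +ᵥ (L.addSubgroupOf H : Set H) := by
  by_cases hne : ((fun x : H => a + (x : G)) ⁻¹' (b +ᵥ (L : Set G))).Nonempty
  · obtain ⟨c, hc⟩ := hne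
    refine ⟨c, fun x hx => ?_⟩
    rw [Set.mem_preimage, mem_leftAddCoset_iff] at hc hx
    rw [mem_leftAddCoset_iff, SetLike.mem_coe, mem_addSubgroupOf]
    have hcx : -(c : G) + x = -(-b + (a + c)) + (-b + (a + x)) := by
      simp only [neg_add_rev, neg_neg, add_assoc, add_neg_cancel_left, neg_add_cancel_left]
    rw [coe_add, coe_neg, hcx]
    exact L.add_mem (L.neg_mem hc) hx
  · exact ⟨0, by simp [Set.not_nonempty_iff_eq_empty.mp hne]⟩

theorem exists_finiteIndex_addSubgroupOf_of_vadd_subset_iUnion {ι : Type*} [Finite ι]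
    {L : ι → AddSubgroup G} {a : G} {b : ι → G}
    (hcover : a +ᵥ (H : Set G) ⊆ ⋃ i, b i +ᵥ (L i : Set G)) :
    ∃ i, ((L i).addSubgroupOf H).FiniteIndex := by
  have := Fintype.ofFinite ι
  choose c hc using fun i =>
    exists_preimage_vadd_subset_vadd_addSubgroupOf (H := H) (L := L i) a (b i)
  have hcovers : ⋃ i ∈ Finset.univ, c i +ᵥ ((L i).addSubgroupOf H : Set H) = Set.univ := by
    refine Set.eq_univ_of_forall fun x => ?_
    obtain ⟨i, hi⟩ := Set.mem_iUnion.mp (hcover ⟨x, x.2, rfl⟩)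
    exact Set.mem_biUnion (Finset.mem_univ i) (hc i hi)
  obtain ⟨i, -, hi⟩ := exists_finiteIndex_of_leftCoset_cover hcovers
  exact ⟨i, hi⟩

end AddSubgroup

theorem coset_not_subset_union {R : Type*} [CommRing R] (n : ℕ)
    (I : Ideal R) (J : Fin n → Ideal R)
    (hinf : ∀ i, Infinite
      (I.toAddSubgroup ⧸ ((I ⊓ J i : Ideal R).toAddSubgroup.addSubgroupOf I.toAddSubgroup)))
    (a : R) (b : Fin n → R) :
    ¬ (a +ᵥ (I : Set R)) ⊆ ⋃ i, b i +ᵥ ((I ⊓ J i : Ideal R) : Set R) := by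
  intro hcover
  obtain ⟨i, hi⟩ := AddSubgroup.exists_finiteIndex_addSubgroupOf_of_vadd_subset_iUnion
    (H := I.toAddSubgroup) (L := fun i => (I ⊓ J i).toAddSubgroup) hcover
  exact hi.index_ne_zero (AddSubgroup.index_eq_zero_iff_infinite.mpr (hinf i))
end

section
/- Let $R$ be an integral domain with finite quotients. Then the collection $\tilde{\mathcal C} = \{\bigcup_{i=1}^n (a_i + I_i) : n \ge 0,\ I_i \text{ a nontrivial ideal of } R,\ a_i \in R\}$ of finite unions of cosets of nonzero ideals, together with the empty set and $R$, is closed under finite intersections, complements, finite unions, and under the injective affine transformations $X \mapsto a + bX$ for $a \in R$, $b \in R \setminus \{0\}$. -/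
/-!
Two cosets of nonzero ideals `I`, `J` are either disjoint or meet in a coset of `I ⊓ J`, which
contains `I * J ≠ ⊥` in a domain. A nonzero ideal `I` contains some `b ≠ 0`, so `R ⧸ I` is a
quotient of the finite ring `R ⧸ (b)`; hence the complement of a coset of `I` is the finite union
of the other cosets of `I`, and the complement of a finite union of cosets is a finite
intersection of such unions. Finally `x ↦ a + b * x` maps `c + I` onto `(a + b * c) + (b) * I`.
-/

open Pointwise

/-- The collection of finite unions of cosets of nonzero ideals of `R`
(including the empty union `∅`). -/
def IsCosetUnion {R : Type*} [CommRing R] (X : Set R) : Prop :=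
  ∃ (n : ℕ) (a : Fin n → R) (I : Fin n → Ideal R),
    (∀ i, I i ≠ ⊥) ∧ X = ⋃ i, a i +ᵥ ((I i : Ideal R) : Set R)

section CommRing

variable {R : Type*} [CommRing R]

theorem mem_vadd_ideal_iff {a x : R} {I : Ideal R} : x ∈ a +ᵥ (I : Set R) ↔ x - a ∈ I := by
  rw [mem_leftAddCoset_iff, SetLike.mem_coe, neg_add_eq_sub]

theorem Ideal.Quotient.mk_preimage_singleton_mk (I : Ideal R) (a : R) :
    Ideal.Quotient.mk I ⁻¹' {Ideal.Quotient.mk I a} = a +ᵥ (I : Set R) := by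
  ext x
  rw [Set.mem_preimage, Set.mem_singleton_iff, Ideal.Quotient.eq, mem_vadd_ideal_iff]

theorem vadd_ideal_eq_of_mem {a c : R} {I : Ideal R} (h : c ∈ a +ᵥ (I : Set R)) :
    a +ᵥ (I : Set R) = c +ᵥ (I : Set R) := by
  rw [← Ideal.Quotient.mk_preimage_singleton_mk, ← Ideal.Quotient.mk_preimage_singleton_mk,
    Ideal.Quotient.eq.2 (mem_vadd_ideal_iff.1 h)]

theorem isCosetUnion_empty : IsCosetUnion (∅ : Set R) :=
  ⟨0, Fin.elim0, Fin.elim0, fun i => i.elim0, by simp⟩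

theorem isCosetUnion_vadd_ideal (a : R) {I : Ideal R} (hI : I ≠ ⊥) :
    IsCosetUnion (a +ᵥ (I : Set R)) :=
  ⟨1, fun _ => a, fun _ => I, fun _ => hI, (Set.iUnion_const _).symm⟩

theorem isCosetUnion_univ [Nontrivial R] : IsCosetUnion (Set.univ : Set R) := by
  simpa using isCosetUnion_vadd_ideal (0 : R) (top_ne_bot : (⊤ : Ideal R) ≠ ⊥)

theorem IsCosetUnion.union {X Y : Set R} (hX : IsCosetUnion X) (hY : IsCosetUnion Y) :
    IsCosetUnion (X ∪ Y) := by
  obtain ⟨n, a, I, hI, rfl⟩ := hX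
  obtain ⟨m, b, J, hJ, rfl⟩ := hY
  refine ⟨n + m, Fin.append a b, Fin.append I J, ?_, ?_⟩
  · simpa [Fin.forall_fin_add] using ⟨hI, hJ⟩
  · ext x
    simp only [Set.mem_union, Set.mem_iUnion]
    rw [← not_iff_not]
    simp [Fin.forall_fin_add]

theorem isCosetUnion_biUnion {ι : Type*} (s : Finset ι) {f : ι → Set R}
    (h : ∀ i ∈ s, IsCosetUnion (f i)) : IsCosetUnion (⋃ i ∈ s, f i) := by
  classical
  induction s using Finset.induction_on with
  | empty => simpa using isCosetUnion_empty
  | insert i s _ ih =>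
    rw [Finset.set_biUnion_insert]
    exact (h i (s.mem_insert_self i)).union (ih fun j hj => h j (Finset.mem_insert_of_mem hj))

theorem isCosetUnion_iUnion {ι : Type*} [Finite ι] {f : ι → Set R}
    (h : ∀ i, IsCosetUnion (f i)) : IsCosetUnion (⋃ i, f i) := by
  have := Fintype.ofFinite ι
  simpa using isCosetUnion_biUnion Finset.univ fun i _ => h i

theorem isCosetUnion_preimage_quotient_mk {I : Ideal R} (hI : I ≠ ⊥) [Finite (R ⧸ I)]
    (S : Set (R ⧸ I)) : IsCosetUnion (Ideal.Quotient.mk I ⁻¹' S) := by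
  rw [← Set.biUnion_preimage_singleton, Set.biUnion_eq_iUnion]
  refine isCosetUnion_iUnion fun ⟨c, _⟩ => ?_
  obtain ⟨a, rfl⟩ := Ideal.Quotient.mk_surjective c
  rw [Ideal.Quotient.mk_preimage_singleton_mk]
  exact isCosetUnion_vadd_ideal a hI

theorem image_affine_vadd_ideal (a b c : R) (I : Ideal R) :
    (fun x => a + b * x) '' (c +ᵥ (I : Set R)) =
      (a + b * c) +ᵥ ((Ideal.span {b} * I : Ideal R) : Set R) := by
  ext x
  simp only [Set.mem_image, mem_vadd_ideal_iff, Ideal.mem_span_singleton_mul]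
  constructor
  · rintro ⟨y, hy, rfl⟩
    exact ⟨y - c, hy, by ring⟩
  · rintro ⟨z, hz, hbz⟩
    exact ⟨c + z, by simpa using hz, by linear_combination hbz⟩

theorem finite_quotient_of_ne_bot (hfq : ∀ b : R, b ≠ 0 → Finite (R ⧸ Ideal.span {b}))
    {I : Ideal R} (hI : I ≠ ⊥) : Finite (R ⧸ I) := by
  obtain ⟨b, hbI, hb⟩ := Submodule.exists_mem_ne_zero_of_ne_bot hI
  have := hfq b hb
  exact Finite.of_surjective _ <|
    Ideal.Quotient.factor_surjective ((Ideal.span_singleton_le_iff_mem _).2 hbI)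

theorem Ideal.mul_ne_bot [NoZeroDivisors R] {I J : Ideal R} (hI : I ≠ ⊥) (hJ : J ≠ ⊥) :
    I * J ≠ ⊥ :=
  Ideal.mul_eq_bot.not.2 (not_or.2 ⟨hI, hJ⟩)

end CommRing

section IsDomain

variable {R : Type*} [CommRing R] [IsDomain R]

theorem isCosetUnion_vadd_ideal_inter_vadd_ideal (a b : R) {I J : Ideal R} (hI : I ≠ ⊥)
    (hJ : J ≠ ⊥) : IsCosetUnion ((a +ᵥ (I : Set R)) ∩ (b +ᵥ (J : Set R))) := by
  rcases Set.eq_empty_or_nonempty ((a +ᵥ (I : Set R)) ∩ (b +ᵥ (J : Set R)))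
    with h | ⟨c, hcI, hcJ⟩
  · exact h ▸ isCosetUnion_empty
  · have hIJ : I ⊓ J ≠ ⊥ := ne_bot_of_le_ne_bot (Ideal.mul_ne_bot hI hJ) Ideal.mul_le_inf
    rw [vadd_ideal_eq_of_mem hcI, vadd_ideal_eq_of_mem hcJ, ← Set.vadd_set_inter,
      ← Submodule.coe_inf]
    exact isCosetUnion_vadd_ideal c hIJ

theorem IsCosetUnion.inter {X Y : Set R} (hX : IsCosetUnion X) (hY : IsCosetUnion Y) :
    IsCosetUnion (X ∩ Y) := by
  obtain ⟨n, a, I, hI, rfl⟩ := hX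
  obtain ⟨m, b, J, hJ, rfl⟩ := hY
  simp_rw [Set.iUnion_inter, Set.inter_iUnion]
  exact isCosetUnion_iUnion fun i => isCosetUnion_iUnion fun j =>
    isCosetUnion_vadd_ideal_inter_vadd_ideal (a i) (b j) (hI i) (hJ j)

theorem isCosetUnion_biInter {ι : Type*} (s : Finset ι) {f : ι → Set R}
    (h : ∀ i ∈ s, IsCosetUnion (f i)) : IsCosetUnion (⋂ i ∈ s, f i) := by
  classical
  induction s using Finset.induction_on with
  | empty => simpa using isCosetUnion_univ
  | insert i s _ ih =>
    rw [Finset.set_biInter_insert]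
    exact (h i (s.mem_insert_self i)).inter (ih fun j hj => h j (Finset.mem_insert_of_mem hj))

theorem isCosetUnion_iInter {ι : Type*} [Finite ι] {f : ι → Set R}
    (h : ∀ i, IsCosetUnion (f i)) : IsCosetUnion (⋂ i, f i) := by
  have := Fintype.ofFinite ι
  simpa using isCosetUnion_biInter Finset.univ fun i _ => h i

theorem IsCosetUnion.compl (hfq : ∀ b : R, b ≠ 0 → Finite (R ⧸ Ideal.span {b}))
    {X : Set R} (hX : IsCosetUnion X) : IsCosetUnion Xᶜ := by
  obtain ⟨n, a, I, hI, rfl⟩ := hX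
  rw [Set.compl_iUnion]
  refine isCosetUnion_iInter fun i => ?_
  have := finite_quotient_of_ne_bot hfq (hI i)
  rw [← Ideal.Quotient.mk_preimage_singleton_mk, ← Set.preimage_compl]
  exact isCosetUnion_preimage_quotient_mk (hI i) _

theorem IsCosetUnion.image_affine {X : Set R} (a : R) {b : R} (hb : b ≠ 0)
    (hX : IsCosetUnion X) : IsCosetUnion ((fun x => a + b * x) '' X) := by
  obtain ⟨n, c, I, hI, rfl⟩ := hX
  rw [Set.image_iUnion]
  refine isCosetUnion_iUnion fun i => ?_
  rw [image_affine_vadd_ideal]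
  exact isCosetUnion_vadd_ideal _ <| Ideal.mul_ne_bot (by simpa using hb) (hI i)

end IsDomain

theorem cosetUnion_algebra {R : Type*} [CommRing R] [IsDomain R]
    (hfq : ∀ b : R, b ≠ 0 → Finite (R ⧸ Ideal.span {b})) :
    IsCosetUnion (∅ : Set R) ∧
    IsCosetUnion (Set.univ : Set R) ∧
    (∀ X Y : Set R, IsCosetUnion X → IsCosetUnion Y → IsCosetUnion (X ∩ Y)) ∧
    (∀ X : Set R, IsCosetUnion X → IsCosetUnion Xᶜ) ∧
    (∀ X Y : Set R, IsCosetUnion X → IsCosetUnion Y → IsCosetUnion (X ∪ Y)) ∧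
    (∀ (X : Set R) (a b : R), b ≠ 0 → IsCosetUnion X →
      IsCosetUnion ((fun x => a + b * x) '' X)) :=
  ⟨isCosetUnion_empty, isCosetUnion_univ, fun _ _ hX hY => hX.inter hY,
    fun _ hX => hX.compl hfq, fun _ _ hX hY => hX.union hY,
    fun _ a _ hb hX => hX.image_affine a hb⟩
end
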